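/- Let N be the normalizer of C in G. The reflections of G contained in C are exactly the four elements s_{β₁}, s_{β₂}, s_{β₃}, s_{β₄}; conjugation by elements of N permutes this 4-element set, giving a group homomorphism from N to the symmetric group on {s_{β₁}, s_{β₂}, s_{β₃}, s_{β₄}}; this homomorphism is surjective with kernel C, so that N/C ≅ S₄ and |N| = 384. -/

import Mathlib

open scoped TensorProduct

/-- The lattice `L = ℤ⁷` with standard basis `ℓ, e₁, …, e₆`. -/
abbrev L : Type := Fin 7 → ℤ

/-- The symmetric bilinear form `B(x,y) = x₀y₀ − x₁y₁ − ⋯ − x₆y₆`. -/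
def B (x y : L) : ℤ :=
  x 0 * y 0 - (x 1 * y 1 + x 2 * y 2 + x 3 * y 3 + x 4 * y 4 + x 5 * y 5 + x 6 * y 6)

/-- `h = 3ℓ − e₁ − ⋯ − e₆`, the hyperplane class, with `B(h,h) = 3`. -/
def hv : L := ![3, -1, -1, -1, -1, -1, -1]

/-- The set of lines: `Y = {y ∈ L : B(h,y) = 1 ∧ B(y,y) = −1}`. -/
def Yset : Set L := {y | B hv y = 1 ∧ B y y = -1}

/-- The set of roots: `R = {α ∈ L : B(h,α) = 0 ∧ B(α,α) = −2}`. -/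
def Rset : Set L := {a | B hv a = 0 ∧ B a a = -2}

lemma B_add_smul_left (x y α : L) (c : ℤ) : B (x + c • α) y = B x y + c * B α y := by
  simp only [B, Pi.add_apply, Pi.smul_apply, smul_eq_mul]; ring

/-- The reflection `s_α(x) = x + B(x,α)·α` as a linear map. -/
def sLinMap (α : L) : L →ₗ[ℤ] L where
  toFun x := x + B x α • α
  map_add' x y := by
    funext i
    simp only [B, Pi.add_apply, Pi.smul_apply, smul_eq_mul]
    ring
  map_smul' c x := by
    funext i
    simp only [B, Pi.add_apply, Pi.smul_apply, smul_eq_mul, RingHom.id_apply]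
    ring

lemma sLinMap_apply (α x : L) : sLinMap α x = x + B x α • α := rfl

/-- The reflection `s_α` as a linear automorphism of `L`, for `α` with `B(α,α) = −2`. -/
def sEquiv (α : L) (hα : B α α = -2) : L ≃ₗ[ℤ] L :=
  LinearEquiv.ofLinear (sLinMap α) (sLinMap α)
    (by
      refine LinearMap.ext fun x => ?_
      simp only [LinearMap.comp_apply, LinearMap.id_apply, sLinMap_apply]
      rw [B_add_smul_left, hα]
      have h : B x α + B x α * (-2) = -(B x α) := by ring
      rw [h, neg_smul]
      abel)
    (by
      refine LinearMap.ext fun x => ?_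
      simp only [LinearMap.comp_apply, LinearMap.id_apply, sLinMap_apply]
      rw [B_add_smul_left, hα]
      have h : B x α + B x α * (-2) = -(B x α) := by ring
      rw [h, neg_smul]
      abel)

lemma sEquiv_apply (α : L) (hα : B α α = -2) (x : L) : sEquiv α hα x = x + B x α • α := rfl

/-- `g` is a reflection `s_α` for some root `α ∈ R`. -/
def IsReflection (g : L ≃ₗ[ℤ] L) : Prop := ∃ α ∈ Rset, ∀ x, g x = x + B x α • α

/-- `G = Weyl(E₆)`, the subgroup of `GL(L)` generated by the reflections `s_α`, `α ∈ R`. -/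
def G : Subgroup (L ≃ₗ[ℤ] L) := Subgroup.closure {g | IsReflection g}

/-- The four pairwise orthogonal roots `β₁ = e₁ − e₂`, `β₂ = e₃ − e₄`, `β₃ = e₅ − e₆`,
`β₄ = 2ℓ − e₁ − ⋯ − e₆`. -/
def βv : Fin 4 → L :=
  ![![0, 1, -1, 0, 0, 0, 0], ![0, 0, 0, 1, -1, 0, 0], ![0, 0, 0, 0, 0, 1, -1],
    ![2, -1, -1, -1, -1, -1, -1]]

lemma βv_norm : ∀ i, B (βv i) (βv i) = -2 := by decide

lemma βv_orth_h : ∀ i, B hv (βv i) = 0 := by decide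

/-- The four commuting reflections `s_{β₁}, …, s_{β₄}`. -/
def sβ (i : Fin 4) : L ≃ₗ[ℤ] L := sEquiv (βv i) (βv_norm i)

/-- The maximal cube `C = ⟨s_{β₁}, s_{β₂}, s_{β₃}, s_{β₄}⟩`. -/
def C : Subgroup (L ≃ₗ[ℤ] L) := Subgroup.closure (Set.range sβ)

/-- The normalizer `N` of `C` in `G`. -/
def N : Subgroup (L ≃ₗ[ℤ] L) := Subgroup.normalizer (C : Set (L ≃ₗ[ℤ] L)) ⊓ G

/-!
Conjugating `s_α` by an isometry `u` gives `s_{uα}`, and `s_α = s_β` forces `β = ±α`. So an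
element of `N` sends each `s_{βᵢ}` to a reflection lying in `C`, and the only reflections among the
sixteen products `∏_{i ∈ S} s_{βᵢ}` are the `s_{βᵢ}` themselves, since a reflection cannot negate
two orthogonal vectors. An element of `N` centralising the `s_{βᵢ}` maps each `βᵢ` to `±βᵢ`; after
correcting the signs by an element of `C` it fixes `h` and every `βᵢ`, and such an isometry is the
identity: the lines `e₁, e₃, e₅` are determined by their pairings with `h` and the `βᵢ`, while
`e₂ = e₁ − β₁`, `e₄ = e₃ − β₂`, `e₆ = e₅ − β₃` and `ℓ = h − β₄`. The adjacent transpositions of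
`S₄` are realised by products of two reflections, whence `|N| = 24 · 16`.
-/

section ConjPerm

variable {M ι : Type*} [Group M] {f : ι → M} {H : Subgroup M}
  (hH : ∀ n ∈ H, ∀ i, ∃ j, n * f i * n⁻¹ = f j)

noncomputable def conjIndex (n : H) (i : ι) : ι := (hH n n.2 i).choose

lemma apply_conjIndex (n : H) (i : ι) : f (conjIndex hH n i) = n * f i * n⁻¹ :=
  (hH n n.2 i).choose_spec.symm

lemma conjIndex_injective (hf : Function.Injective f) (n : H) :
    Function.Injective (conjIndex hH n) := fun i j hij => by
  have h := apply_conjIndex hH n i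
  rw [hij, apply_conjIndex hH, mul_left_inj, mul_right_inj] at h
  exact hf h.symm

noncomputable def conjPerm [Finite ι] (hf : Function.Injective f) : H →* Equiv.Perm ι where
  toFun n := Equiv.ofBijective _ (Finite.injective_iff_bijective.mp (conjIndex_injective hH hf n))
  map_one' := Equiv.ext fun i => hf <| by
    rw [Equiv.ofBijective_apply, apply_conjIndex hH]
    simp
  map_mul' a b := Equiv.ext fun i => hf <| by
    simp only [Equiv.ofBijective_apply, Equiv.Perm.mul_apply, apply_conjIndex hH, Subgroup.coe_mul,
      Subgroup.coe_inv]
    group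

lemma conjPerm_eq_iff [Finite ι] (hf : Function.Injective f) (n : H) (σ : Equiv.Perm ι) :
    conjPerm hH hf n = σ ↔ ∀ i, n * f i * n⁻¹ = f (σ i) := by
  simp only [Equiv.ext_iff, conjPerm, MonoidHom.coe_mk, OneHom.coe_mk, Equiv.ofBijective_apply,
    ← hf.eq_iff, apply_conjIndex hH]

end ConjPerm

lemma eq_zero_or_eq_one_of_sum_sq_eq_sum {ι : Type*} (s : Finset ι) (x : ι → ℤ)
    (h : ∑ i ∈ s, x i ^ 2 = ∑ i ∈ s, x i) : ∀ i ∈ s, x i = 0 ∨ x i = 1 := by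
  have hsum : ∑ i ∈ s, (x i ^ 2 - x i) = 0 := by rw [Finset.sum_sub_distrib, h, sub_self]
  intro i hi
  have hi0 := (Finset.sum_eq_zero_iff_of_nonneg fun j _ => sub_nonneg.mpr (Int.le_self_sq (x j))).mp
    hsum i hi
  have : x i * (x i - 1) = 0 := by linear_combination hi0
  exact (mul_eq_zero.mp this).imp id sub_eq_zero.mp

lemma B_comm (x y : L) : B x y = B y x := by
  simp only [B]; ring

lemma B_add_smul_right (x y α : L) (c : ℤ) : B x (y + c • α) = B x y + c * B x α := by
  rw [B_comm, B_add_smul_left, B_comm y, B_comm α]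

lemma B_smul_left (c : ℤ) (x y : L) : B (c • x) y = c * B x y := by
  simp only [B, Pi.smul_apply, smul_eq_mul]; ring

lemma B_smul_smul (a b : ℤ) (x y : L) : B (a • x) (b • y) = a * b * B x y := by
  simp only [B, Pi.smul_apply, smul_eq_mul]; ring

lemma sEquiv_apply_self (α : L) (hα : B α α = -2) : sEquiv α hα α = -α := by
  rw [sEquiv_apply, hα, neg_smul, two_smul, neg_add, add_neg_cancel_left]

lemma sEquiv_commute (α β : L) (hα : B α α = -2) (hβ : B β β = -2) (hαβ : B α β = 0) :
    sEquiv α hα * sEquiv β hβ = sEquiv β hβ * sEquiv α hα := by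
  ext x : 1
  simp only [LinearEquiv.mul_apply, sEquiv_apply, B_add_smul_left, hαβ, B_comm β α, mul_zero,
    add_zero]
  abel

lemma sEquiv_congr {α β : L} (hα : B α α = -2) (hβ : B β β = -2) (h : α = β) :
    sEquiv α hα = sEquiv β hβ := by
  subst h; rfl

lemma conj_sEquiv (u : L ≃ₗ[ℤ] L) (hu : ∀ x y, B (u x) (u y) = B x y) (α : L) (hα : B α α = -2) :
    u * sEquiv α hα * u⁻¹ = sEquiv (u α) (by rw [hu, hα]) := by
  rw [mul_inv_eq_iff_eq_mul]
  ext x : 1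
  simp only [LinearEquiv.mul_apply, sEquiv_apply, map_add, map_smul, hu]

lemma eq_or_eq_neg_of_smul_eq {α β : L} (hα : B α α = -2) (hβ : B β β = -2) {c : ℤ}
    (h : c • α = (-2 : ℤ) • β) : α = β ∨ α = -β := by
  have hc : c * c = 4 := by
    have := congrArg (fun v => B v v) h
    simp only [B_smul_smul, hα, hβ] at this
    linarith
  have hc' : c = -2 ∨ c = 2 := by
    have : (c + 2) * (c - 2) = 0 := by linarith
    rcases mul_eq_zero.mp this with h | h
    · exact Or.inl (by linarith)
    · exact Or.inr (by linarith)
  rcases hc' with rfl | rfl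
  · exact Or.inl (smul_right_injective L (by norm_num) h)
  · refine Or.inr (smul_right_injective L (show (2 : ℤ) ≠ 0 by norm_num) ?_)
    simp only [h, smul_neg, neg_smul]

lemma eq_or_eq_neg_of_sEquiv_eq {α β : L} (hα : B α α = -2) (hβ : B β β = -2)
    (h : sEquiv α hα = sEquiv β hβ) : α = β ∨ α = -β := by
  have hα' := sEquiv_apply_self α hα
  rw [h, sEquiv_apply] at hα'
  refine (eq_or_eq_neg_of_smul_eq hβ hα (c := B α β) ?_).imp Eq.symm (fun h => by rw [h, neg_neg])
  linear_combination (norm := module) hα'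

lemma isReflection_sEquiv {α : L} (hα : α ∈ Rset) : IsReflection (sEquiv α hα.2) :=
  ⟨α, hα, fun _ => rfl⟩

lemma sEquiv_mem_G {α : L} (hα : α ∈ Rset) : sEquiv α hα.2 ∈ G :=
  Subgroup.subset_closure (isReflection_sEquiv hα)

lemma not_isReflection_one : ¬ IsReflection 1 := by
  rintro ⟨α, ⟨-, hα⟩, h⟩
  have hα0 : α = 0 := by
    have h2 : (2 : ℤ) • α = 0 := by
      have := h α
      rw [hα, LinearEquiv.coe_one, id] at this
      linear_combination (norm := module) this
    exact (smul_eq_zero.mp h2).resolve_left two_ne_zero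
  simp [hα0, B] at hα

lemma not_isReflection_of_neg_of_neg (g : L ≃ₗ[ℤ] L) {v w : L} (hv : v ≠ 0) (hw : w ≠ 0)
    (hvw : B v w = 0) (hgv : g v = -v) (hgw : g w = -w) : ¬ IsReflection g := by
  rintro ⟨α, -, h⟩
  have hv' : B v α • α = (-2 : ℤ) • v := by linear_combination (norm := module) (h v).symm.trans hgv
  have hw' : B w α • α = (-2 : ℤ) • w := by linear_combination (norm := module) (h w).symm.trans hgw
  have hprod : B v α * B w α = 0 := by
    have := congrArg (fun x => B x w) hv'
    simp only [B_smul_left, hvw, mul_zero] at this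
    rwa [B_comm α w] at this
  rcases mul_eq_zero.mp hprod with h0 | h0
  · rw [h0, zero_smul, eq_comm, smul_eq_zero] at hv'
    exact hv (hv'.resolve_left (by norm_num))
  · rw [h0, zero_smul, eq_comm, smul_eq_zero] at hw'
    exact hw (hw'.resolve_left (by norm_num))

def isometryStabilizer : Subgroup (L ≃ₗ[ℤ] L) where
  carrier := {g | (∀ x y, B (g x) (g y) = B x y) ∧ g hv = hv}
  mul_mem' := by
    rintro g g' ⟨hg, hgh⟩ ⟨hg', hg'h⟩
    exact ⟨fun x y => by simp only [LinearEquiv.mul_apply, hg, hg'], by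
      rw [LinearEquiv.mul_apply, hg'h, hgh]⟩
  one_mem' := ⟨fun _ _ => rfl, rfl⟩
  inv_mem' := by
    rintro g ⟨hg, hgh⟩
    refine ⟨fun x y => ?_, ?_⟩
    · rw [← hg, LinearEquiv.coe_inv, g.apply_symm_apply, g.apply_symm_apply]
    · rw [LinearEquiv.coe_inv, g.symm_apply_eq, hgh]

lemma map_mem_Rset {g : L ≃ₗ[ℤ] L} (hg : g ∈ isometryStabilizer) {α : L} (hα : α ∈ Rset) :
    g α ∈ Rset := by
  obtain ⟨hgB, hgh⟩ := hg
  exact ⟨by rw [← hgh, hgB, hα.1], by rw [hgB, hα.2]⟩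

lemma G_le_isometryStabilizer : G ≤ isometryStabilizer := by
  refine (Subgroup.closure_le _).mpr ?_
  rintro g ⟨α, ⟨hαh, hα⟩, hg⟩
  refine ⟨fun x y => ?_, by rw [hg, hαh, zero_smul, add_zero]⟩
  rw [hg, hg, B_add_smul_left, B_add_smul_right, B_add_smul_right, hα, B_comm α y]
  ring

lemma βv_mem_Rset (i : Fin 4) : βv i ∈ Rset := ⟨βv_orth_h i, βv_norm i⟩

lemma βv_orthogonal : ∀ i j, i ≠ j → B (βv i) (βv j) = 0 := by decide

lemma βv_ne_zero : ∀ i, βv i ≠ 0 := by decide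

lemma βv_ne_neg : ∀ i, βv i ≠ -βv i := by decide

lemma eq_of_βv_eq_or_eq_neg : ∀ i j, βv i = βv j ∨ βv i = -βv j → i = j := by decide

lemma sβ_injective : Function.Injective sβ := fun i j h =>
  eq_of_βv_eq_or_eq_neg i j (eq_or_eq_neg_of_sEquiv_eq _ _ h)

lemma sβ_commute (i j : Fin 4) : sβ i * sβ j = sβ j * sβ i := by
  obtain rfl | hij := eq_or_ne i j
  · rfl
  · exact sEquiv_commute _ _ _ _ (βv_orthogonal i j hij)

lemma sβ_mem_C (i : Fin 4) : sβ i ∈ C := Subgroup.subset_closure ⟨i, rfl⟩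

lemma C_le_G : C ≤ G :=
  (Subgroup.closure_le _).mpr fun _ ⟨i, hi⟩ => hi ▸ sEquiv_mem_G (βv_mem_Rset i)

lemma C_le_N : C ≤ N := le_inf (Subgroup.le_normalizer) C_le_G

lemma C_le_centralizer : C ≤ Subgroup.centralizer (Set.range sβ) :=
  (Subgroup.closure_le _).mpr fun _ ⟨i, hi⟩ => Subgroup.mem_centralizer_iff.mpr
    fun _ ⟨j, hj⟩ => hi ▸ hj ▸ sβ_commute j i

lemma conj_sβ_of_mem_C {c : L ≃ₗ[ℤ] L} (hc : c ∈ C) (i : Fin 4) : c * sβ i * c⁻¹ = sβ i := by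
  rw [mul_inv_eq_iff_eq_mul]
  exact (Subgroup.mem_centralizer_iff.mp (C_le_centralizer hc) _ ⟨i, rfl⟩).symm

def cubeElt (ε : Fin 4 → Bool) : L ≃ₗ[ℤ] L :=
  cond (ε 0) (sβ 0) 1 * cond (ε 1) (sβ 1) 1 * cond (ε 2) (sβ 2) 1 * cond (ε 3) (sβ 3) 1

lemma cubeElt_mem_C (ε : Fin 4 → Bool) : cubeElt ε ∈ C := by
  have h : ∀ i, cond (ε i) (sβ i) 1 ∈ C := fun i => by
    cases ε i
    exacts [one_mem C, sβ_mem_C i]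
  exact mul_mem (mul_mem (mul_mem (h 0) (h 1)) (h 2)) (h 3)

lemma cubeElt_apply_βv : ∀ ε i, cubeElt ε (βv i) = cond (ε i) (-βv i) (βv i) := by decide

lemma cubeElt_false : cubeElt (fun _ => false) = 1 := by simp [cubeElt]

lemma cubeElt_single (i : Fin 4) : cubeElt (fun j => decide (j = i)) = sβ i := by
  fin_cases i <;> simp [cubeElt]

lemma cubeElt_injective : Function.Injective cubeElt := by
  intro ε ε' h
  funext i
  have hi := cubeElt_apply_βv ε i
  rw [h, cubeElt_apply_βv] at hi
  cases hε : ε i <;> cases hε' : ε' i <;> simp only [hε, hε', cond_true, cond_false] at hi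
  all_goals first | rfl | exact absurd hi (βv_ne_neg i) | exact absurd hi.symm (βv_ne_neg i)

/-- The pairings force `w₀ = 0` and `∑ₖ wₖ = ∑ₖ wₖ² = 1`, so `w` is a standard basis vector. -/
lemma line_eq_of_pairings_eq {v w : L}
    (hv' : v = Pi.single 1 1 ∨ v = Pi.single 3 1 ∨ v = Pi.single 5 1)
    (hh : B hv w = B hv v) (hβ : ∀ i, B (βv i) w = B (βv i) v) (hw : B w w = B v v) : w = v := by
  have h0 := hβ 0
  have h1 := hβ 1
  have h2 := hβ 2
  have h3 := hβ 3
  rcases hv' with rfl | rfl | rfl <;>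
  · simp only [B, hv, βv, Int.reduceNeg, Fin.isValue, Matrix.cons_val_zero, Matrix.cons_val_one,
      Matrix.cons_val, Matrix.cons_val', Matrix.cons_val_fin_one, ne_eq, zero_ne_one, Fin.reduceEq,
      not_false_eq_true, Pi.single_eq_of_ne, Pi.single_eq_same, neg_mul, one_mul, mul_zero, mul_one,
      zero_mul, add_zero, zero_add, sub_neg_eq_add, zero_sub, neg_add_rev, neg_neg, sub_self]
      at hh h0 h1 h2 h3 hw
    have hw0 : w 0 = 0 := by linarith
    rw [hw0] at hh hw
    have hbit : ∀ k, w k = 0 ∨ w k = 1 := fun k =>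
      eq_zero_or_eq_one_of_sum_sq_eq_sum Finset.univ w
        (by simp only [Fin.sum_univ_seven, hw0, sq]; linarith) k (Finset.mem_univ k)
    have := hbit 1
    have := hbit 2
    have := hbit 3
    have := hbit 4
    have := hbit 5
    have := hbit 6
    funext k
    fin_cases k <;>
      simp only [Fin.zero_eta, Fin.mk_one, Fin.reduceFinMk, Fin.isValue, ne_eq, zero_ne_one,
        Fin.reduceEq, not_false_eq_true, Pi.single_eq_of_ne, Pi.single_eq_same] <;>
      omega

lemma eq_one_of_apply_βv_eq {m : L ≃ₗ[ℤ] L} (hm : m ∈ isometryStabilizer)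
    (hβ : ∀ i, m (βv i) = βv i) : m = 1 := by
  obtain ⟨hB, hh⟩ := hm
  have hline : ∀ v : L, (v = Pi.single 1 1 ∨ v = Pi.single 3 1 ∨ v = Pi.single 5 1) → m v = v :=
    fun v hv' => line_eq_of_pairings_eq hv' (by rw [← hB hv v, hh])
      (fun i => by rw [← hB (βv i) v, hβ]) (hB v v)
  have he1 := hline _ (Or.inl rfl)
  have he3 := hline _ (Or.inr (Or.inl rfl))
  have he5 := hline _ (Or.inr (Or.inr rfl))
  have he2 : m (Pi.single 2 1) = Pi.single 2 1 := by
    rw [show (Pi.single 2 1 : L) = Pi.single 1 1 - βv 0 by decide, map_sub, he1, hβ]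
  have he4 : m (Pi.single 4 1) = Pi.single 4 1 := by
    rw [show (Pi.single 4 1 : L) = Pi.single 3 1 - βv 1 by decide, map_sub, he3, hβ]
  have he6 : m (Pi.single 6 1) = Pi.single 6 1 := by
    rw [show (Pi.single 6 1 : L) = Pi.single 5 1 - βv 2 by decide, map_sub, he5, hβ]
  have he0 : m (Pi.single 0 1) = Pi.single 0 1 := by
    rw [show (Pi.single 0 1 : L) = hv - βv 3 by decide, map_sub, hh, hβ]
  refine (Pi.basisFun ℤ (Fin 7)).ext' fun k => ?_
  rw [Pi.basisFun_apply, LinearEquiv.coe_one, id]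
  fin_cases k <;> assumption

lemma conj_sβ {u : L ≃ₗ[ℤ] L} (hu : u ∈ isometryStabilizer) (i : Fin 4) :
    u * sβ i * u⁻¹ = sEquiv (u (βv i)) (map_mem_Rset hu (βv_mem_Rset i)).2 :=
  conj_sEquiv u hu.1 _ _

lemma cubeElt_mem_isometryStabilizer (ε : Fin 4 → Bool) : cubeElt ε ∈ isometryStabilizer :=
  G_le_isometryStabilizer (C_le_G (cubeElt_mem_C ε))

lemma cubeElt_inv (ε : Fin 4 → Bool) : (cubeElt ε)⁻¹ = cubeElt ε := by
  refine inv_eq_of_mul_eq_one_right (eq_one_of_apply_βv_eq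
    (mul_mem (cubeElt_mem_isometryStabilizer ε) (cubeElt_mem_isometryStabilizer ε)) fun i => ?_)
  cases h : ε i <;> simp [cubeElt_apply_βv, h]

lemma exists_cubeElt_eq {u : L ≃ₗ[ℤ] L} (hu : u ∈ isometryStabilizer)
    (hconj : ∀ i, u * sβ i * u⁻¹ = sβ i) : ∃ ε, cubeElt ε = u := by
  have hsign : ∀ i, u (βv i) = βv i ∨ u (βv i) = -βv i := fun i =>
    eq_or_eq_neg_of_sEquiv_eq _ _ ((conj_sβ hu i).symm.trans (hconj i))
  classical
  set ε : Fin 4 → Bool := fun i => decide (u (βv i) = -βv i)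
  refine ⟨ε, (cubeElt_inv ε).symm.trans (inv_eq_of_mul_eq_one_left ?_)⟩
  refine eq_one_of_apply_βv_eq (mul_mem hu (cubeElt_mem_isometryStabilizer ε)) fun i => ?_
  rcases hsign i with h | h <;> simp [ε, cubeElt_apply_βv, h, βv_ne_neg]

lemma coe_C_eq_range_cubeElt : (C : Set (L ≃ₗ[ℤ] L)) = Set.range cubeElt := by
  refine Set.Subset.antisymm (fun c hc => ?_) (Set.range_subset_iff.mpr cubeElt_mem_C)
  exact exists_cubeElt_eq (G_le_isometryStabilizer (C_le_G hc)) (conj_sβ_of_mem_C hc)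

lemma card_C : Nat.card C = 16 := by
  rw [← SetLike.coe_sort_coe, coe_C_eq_range_cubeElt, Nat.card_range_of_injective cubeElt_injective]
  simp

lemma cubeElt_classify : ∀ ε : Fin 4 → Bool, ε = (fun _ => false) ∨
    (∃ i, ε = fun j => decide (j = i)) ∨ (∃ i j, i ≠ j ∧ ε i = true ∧ ε j = true) := by
  decide

lemma setOf_isReflection_mem_C : {g | IsReflection g ∧ g ∈ C} = Set.range sβ := by
  refine Set.Subset.antisymm ?_
    fun _ ⟨i, hi⟩ => hi ▸ ⟨isReflection_sEquiv (βv_mem_Rset i), sβ_mem_C i⟩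
  rintro g ⟨hg, hgC⟩
  rw [← SetLike.mem_coe, coe_C_eq_range_cubeElt] at hgC
  obtain ⟨ε, rfl⟩ := hgC
  rcases cubeElt_classify ε with rfl | ⟨i, rfl⟩ | ⟨i, j, hij, hi, hj⟩
  · exact absurd (cubeElt_false ▸ hg) not_isReflection_one
  · exact ⟨i, (cubeElt_single i).symm⟩
  · refine absurd hg (not_isReflection_of_neg_of_neg _ (βv_ne_zero i) (βv_ne_zero j)
      (βv_orthogonal i j hij) ?_ ?_) <;> simp [cubeElt_apply_βv, hi, hj]

lemma conj_sβ_mem_range : ∀ n ∈ N, ∀ i : Fin 4, ∃ j : Fin 4, n * sβ i * n⁻¹ = sβ j := by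
  intro n ⟨hnC, hnG⟩ i
  have hn := G_le_isometryStabilizer hnG
  have hmem : n * sβ i * n⁻¹ ∈ {g | IsReflection g ∧ g ∈ C} := by
    refine ⟨conj_sβ hn i ▸ isReflection_sEquiv (map_mem_Rset hn (βv_mem_Rset i)), ?_⟩
    exact (Subgroup.mem_normalizer_iff.mp hnC _).mp (sβ_mem_C i)
  rw [setOf_isReflection_mem_C] at hmem
  obtain ⟨j, hj⟩ := hmem
  exact ⟨j, hj.symm⟩

lemma mem_C_of_conj_sβ_eq {n : L ≃ₗ[ℤ] L} (hn : n ∈ isometryStabilizer)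
    (hconj : ∀ i, n * sβ i * n⁻¹ = sβ i) : n ∈ C := by
  obtain ⟨ε, rfl⟩ := exists_cubeElt_eq hn hconj
  exact cubeElt_mem_C ε

lemma mem_N_of_conj_sβ_eq {n : L ≃ₗ[ℤ] L} (hn : n ∈ G) (σ : Equiv.Perm (Fin 4))
    (hconj : ∀ i, n * sβ i * n⁻¹ = sβ (σ i)) : n ∈ N := by
  refine ⟨Subgroup.normalizer_le_normalizer_closure _ ?_, hn⟩
  rw [Subgroup.mem_normalizer_iff_conj_image_eq, ← Set.range_comp]
  convert σ.surjective.range_comp sβ using 2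
  ext i : 1
  exact hconj i

/-- The root pairs `(e₁ − e₃, e₂ − e₄)`, `(e₃ − e₅, e₄ − e₆)` and
`(ℓ − e₃ − e₄ − e₅, ℓ − e₁ − e₂ − e₅)`. -/
def swapRoots : Fin 3 → Fin 2 → L :=
  ![![![0, 1, 0, -1, 0, 0, 0], ![0, 0, 1, 0, -1, 0, 0]],
    ![![0, 0, 0, 1, 0, -1, 0], ![0, 0, 0, 0, 1, 0, -1]],
    ![![1, 0, 0, -1, -1, -1, 0], ![1, -1, -1, 0, 0, -1, 0]]]

lemma swapRoots_mem_Rset (k : Fin 3) (j : Fin 2) : swapRoots k j ∈ Rset := by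
  simp only [Rset, Set.mem_ofPred_eq]
  revert k j
  decide

def adjSwap (k : Fin 3) : L ≃ₗ[ℤ] L :=
  sEquiv (swapRoots k 0) (swapRoots_mem_Rset k 0).2 *
    sEquiv (swapRoots k 1) (swapRoots_mem_Rset k 1).2

lemma adjSwap_mem_G (k : Fin 3) : adjSwap k ∈ G :=
  mul_mem (sEquiv_mem_G (swapRoots_mem_Rset k 0)) (sEquiv_mem_G (swapRoots_mem_Rset k 1))

lemma adjSwap_apply_βv : ∀ k i, adjSwap k (βv i) = βv (Equiv.swap k.castSucc k.succ i) := by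
  decide

lemma conj_sβ_eq_of_apply_βv {n : L ≃ₗ[ℤ] L} (hn : n ∈ isometryStabilizer) (σ : Equiv.Perm (Fin 4))
    (h : ∀ i, n (βv i) = βv (σ i)) (i : Fin 4) : n * sβ i * n⁻¹ = sβ (σ i) :=
  (conj_sβ hn i).trans (sEquiv_congr _ _ (h i))

lemma exists_mem_N_conj_sβ_eq (σ : Equiv.Perm (Fin 4)) :
    ∃ n ∈ N, ∀ i, n * sβ i * n⁻¹ = sβ (σ i) := by
  have hσ : σ ∈ Submonoid.closure (Set.range fun k : Fin 3 => Equiv.swap k.castSucc k.succ) :=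
    Equiv.Perm.mclosure_swap_castSucc_succ 3 ▸ Submonoid.mem_top σ
  induction hσ using Submonoid.closure_induction with
  | mem _ hτ =>
    obtain ⟨k, rfl⟩ := hτ
    have hconj := conj_sβ_eq_of_apply_βv (G_le_isometryStabilizer (adjSwap_mem_G k)) _
      (adjSwap_apply_βv k)
    exact ⟨adjSwap k, mem_N_of_conj_sβ_eq (adjSwap_mem_G k) _ hconj, hconj⟩
  | one => exact ⟨1, one_mem N, fun i => by simp⟩
  | mul τ τ' _ _ hτ hτ' =>
    obtain ⟨n, hn, hconj⟩ := hτ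
    obtain ⟨n', hn', hconj'⟩ := hτ'
    refine ⟨n * n', mul_mem hn hn', fun i => ?_⟩
    rw [show n * n' * sβ i * (n * n')⁻¹ = n * (n' * sβ i * n'⁻¹) * n⁻¹ by group, hconj', hconj]
    rfl

lemma conj_sβ_eq_iff_mem_C {n : L ≃ₗ[ℤ] L} (hn : n ∈ N) :
    (∀ i, n * sβ i * n⁻¹ = sβ i) ↔ n ∈ C :=
  ⟨mem_C_of_conj_sβ_eq (G_le_isometryStabilizer hn.2), fun hC => conj_sβ_of_mem_C hC⟩

lemma card_N : Nat.card N = 384 := by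
  set φ := conjPerm conj_sβ_mem_range sβ_injective
  have hsurj : Function.Surjective φ := fun σ => by
    obtain ⟨n, hn, hconj⟩ := exists_mem_N_conj_sβ_eq σ
    exact ⟨⟨n, hn⟩, (conjPerm_eq_iff _ _ _ _).mpr hconj⟩
  have hker : φ.ker = C.subgroupOf N := by
    ext n
    rw [MonoidHom.mem_ker, conjPerm_eq_iff, Subgroup.mem_subgroupOf, ← conj_sβ_eq_iff_mem_C n.2]
    rfl
  rw [Subgroup.card_eq_card_quotient_mul_card_subgroup φ.ker,
    Nat.card_congr (QuotientGroup.quotientKerEquivOfSurjective φ hsurj).toEquiv, hker,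
    Nat.card_congr (Subgroup.subgroupOfEquivOfLe C_le_N).toEquiv, card_C]
  simp [Fintype.card_perm, Nat.factorial]

/-- The reflections contained in `C` are exactly `s_{β₁}, …, s_{β₄}` (pairwise distinct);
conjugation by `N` permutes them; the resulting homomorphism to the symmetric group on
these four reflections is surjective with kernel `C` (so `N/C ≅ S₄`), and `|N| = 384`. -/
theorem normalizer_of_maximal_cube :
    Function.Injective sβ ∧
    {g : L ≃ₗ[ℤ] L | IsReflection g ∧ g ∈ C} = Set.range sβ ∧
    (∀ n ∈ N, ∀ i : Fin 4, ∃ j : Fin 4, n * sβ i * n⁻¹ = sβ j) ∧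
    (∀ σ : Equiv.Perm (Fin 4), ∃ n ∈ N, ∀ i : Fin 4, n * sβ i * n⁻¹ = sβ (σ i)) ∧
    (∀ n ∈ N, ((∀ i : Fin 4, n * sβ i * n⁻¹ = sβ i) ↔ n ∈ C)) ∧
    Nat.card ↥N = 384 :=
  ⟨sβ_injective, setOf_isReflection_mem_C, conj_sβ_mem_range, exists_mem_N_conj_sβ_eq,
    fun _ hn => conj_sβ_eq_iff_mem_C hn, card_N⟩
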